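/- arXiv:2405.05100 — 2 statements merged into one kernel-verified Lean document; each statement's English description precedes it below -/
import Mathlib

section
/- For every real m ≥ 1, the function s ↦ f̄(m, s) is monotone nondecreasing on [0, ∞). -/
open Real MeasureTheory Set

/-- The error function `erf`. -/
noncomputable def erf (x : ℝ) : ℝ := (2 / Real.sqrt π) * ∫ t in (0:ℝ)..x, Real.exp (-t ^ 2)

/-- The complementary error function `erfc`. -/
noncomputable def erfc (x : ℝ) : ℝ := 1 - erf x

/-- The bound `f̄(m, s)` from Theorem 2 of the paper. -/
noncomputable def fbar (m s : ℝ) : ℝ :=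
  erf ((m - 1) * Real.sqrt s / Real.sqrt 2)
    + Real.sqrt (2 / π) * (m - 1) * Real.sqrt s * Real.exp (-((m - 1) ^ 2 * s) / 2)
    - (m - 1) ^ 2 * s * erfc ((m - 1) * Real.sqrt s / Real.sqrt 2)


lemma integrable_gauss : Integrable (fun t : ℝ => Real.exp (-t ^ 2)) := by
  have := integrable_exp_neg_mul_sq (b := (1:ℝ)) one_pos
  simpa using this

lemma hasDerivAt_erf (x : ℝ) :
    HasDerivAt erf (2 / Real.sqrt π * Real.exp (-x ^ 2)) x := by
  have h : HasDerivAt (fun y => ∫ t in (0:ℝ)..y, Real.exp (-t ^ 2)) (Real.exp (-x ^ 2)) x := by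
    refine intervalIntegral.integral_hasDerivAt_right
      integrable_gauss.intervalIntegrable
      integrable_gauss.1.stronglyMeasurableAtFilter
      (Continuous.continuousAt (by continuity))
  exact h.const_mul _

lemma integral_tmul : ∀ x : ℝ, 0 ≤ x →
    ∫ t in Set.Ioi x, t * Real.exp (-t ^ 2) = Real.exp (-x ^ 2) / 2 := by
  intro x hx
  have hderiv : ∀ t ∈ Ici x, HasDerivAt (fun t : ℝ => -(Real.exp (-t ^ 2) / 2))
      (t * Real.exp (-t ^ 2)) t := by
    intro t _
    have h1 : HasDerivAt (fun t : ℝ => -t ^ 2) (-(2 * t)) t := by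
      simpa using (hasDerivAt_pow 2 t).fun_neg
    have := (h1.exp.div_const 2).fun_neg
    refine this.congr_deriv ?_
    ring
  have hpos : ∀ t ∈ Ioi x, 0 ≤ t * Real.exp (-t ^ 2) := fun t ht =>
    mul_nonneg (hx.trans (le_of_lt ht)) (Real.exp_nonneg _)
  have htend : Filter.Tendsto (fun t : ℝ => -(Real.exp (-t ^ 2) / 2)) Filter.atTop (nhds 0) := by
    have : Filter.Tendsto (fun t : ℝ => -t ^ 2) Filter.atTop Filter.atBot := by
      exact Filter.tendsto_neg_atBot_iff.mpr (Filter.tendsto_pow_atTop two_ne_zero)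
    have h2 := (Real.tendsto_exp_atBot.comp this).div_const 2
    simpa using h2.neg
  have := integral_Ioi_of_hasDerivAt_of_nonneg' hderiv hpos htend
  rw [this]; ring

lemma gauss_tail (x : ℝ) (hx : 0 ≤ x) :
    x * ∫ t in Set.Ioi x, Real.exp (-t ^ 2) ≤ Real.exp (-x ^ 2) / 2 := by
  rw [← integral_tmul x hx, ← MeasureTheory.integral_const_mul]
  apply MeasureTheory.setIntegral_mono_on
  · exact (integrable_gauss.const_mul x).integrableOn
  · -- integrability of t * exp (-t^2) on Ioi x
    have hderiv : ∀ t ∈ Ici x, HasDerivAt (fun t : ℝ => -(Real.exp (-t ^ 2) / 2))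
        (t * Real.exp (-t ^ 2)) t := by
      intro t _
      have h1 : HasDerivAt (fun t : ℝ => -t ^ 2) (-(2 * t)) t := by
        simpa using (hasDerivAt_pow 2 t).fun_neg
      have := (h1.exp.div_const 2).fun_neg
      refine this.congr_deriv ?_; ring
    refine integrableOn_Ioi_deriv_of_nonneg' (l := 0) hderiv
      (fun t ht => mul_nonneg (hx.trans (le_of_lt ht)) (Real.exp_nonneg _)) ?_
    have h0 : Filter.Tendsto (fun t : ℝ => -t ^ 2) Filter.atTop Filter.atBot :=
      Filter.tendsto_neg_atBot_iff.mpr (Filter.tendsto_pow_atTop two_ne_zero)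
    have h2 := (Real.tendsto_exp_atBot.comp h0).div_const 2
    simpa using h2.neg
  · exact measurableSet_Ioi
  · intro t ht
    exact mul_le_mul_of_nonneg_right (le_of_lt ht) (Real.exp_nonneg _)

lemma erfc_eq_integral (x : ℝ) (hx : 0 ≤ x) :
    erfc x = (2 / Real.sqrt π) * ∫ t in Set.Ioi x, Real.exp (-t ^ 2) := by
  have hsplit : (∫ t in Set.Ioc 0 x, Real.exp (-t ^ 2)) + ∫ t in Set.Ioi x, Real.exp (-t ^ 2)
      = ∫ t in Set.Ioi (0:ℝ), Real.exp (-t ^ 2) := by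
    rw [← MeasureTheory.setIntegral_union (Set.Ioc_disjoint_Ioi le_rfl) measurableSet_Ioi
      integrable_gauss.integrableOn integrable_gauss.integrableOn,
      Set.Ioc_union_Ioi_eq_Ioi hx]
  have hgauss : ∫ t in Set.Ioi (0:ℝ), Real.exp (-t ^ 2) = Real.sqrt π / 2 := by
    have := integral_gaussian_Ioi 1
    simpa using this
  have hπ : Real.sqrt π ≠ 0 := by positivity
  rw [erfc, erf, intervalIntegral.integral_of_le hx]
  field_simp
  nlinarith [hsplit, hgauss]

lemma key_bound (u : ℝ) (hu : 0 ≤ u) :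
    u * erfc (u / Real.sqrt 2) ≤ Real.sqrt (2 / π) * Real.exp (-(u ^ 2) / 2) := by
  have h2 : (0:ℝ) < Real.sqrt 2 := by positivity
  have hx : 0 ≤ u / Real.sqrt 2 := by positivity
  have htail := gauss_tail (u / Real.sqrt 2) hx
  have hπ : (0:ℝ) < Real.sqrt π := Real.sqrt_pos.mpr Real.pi_pos
  have hsq : (u / Real.sqrt 2) ^ 2 = u ^ 2 / 2 := by
    rw [div_pow, Real.sq_sqrt (by norm_num : (0:ℝ) ≤ 2)]
  rw [erfc_eq_integral _ hx]
  have h2π : Real.sqrt (2 / π) = Real.sqrt 2 / Real.sqrt π :=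
    Real.sqrt_div (by norm_num) π
  rw [hsq] at htail
  set I := ∫ t in Set.Ioi (u / Real.sqrt 2), Real.exp (-t ^ 2) with hI
  have hE : Real.exp (-(u ^ 2) / 2) = Real.exp (-(u ^ 2 / 2)) := by rw [neg_div]
  have huI : u * I ≤ Real.sqrt 2 * Real.exp (-(u ^ 2 / 2)) / 2 := by
    have h := mul_le_mul_of_nonneg_left htail h2.le
    have hid : Real.sqrt 2 * (u / Real.sqrt 2) = u := by field_simp
    have h3 : Real.sqrt 2 * (u / Real.sqrt 2 * I) = u * I := by
      rw [← mul_assoc, hid]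
    linarith [h]
  have hfin := mul_le_mul_of_nonneg_left huI (by positivity : (0:ℝ) ≤ 2 / Real.sqrt π)
  calc u * (2 / Real.sqrt π * I) = 2 / Real.sqrt π * (u * I) := by ring
    _ ≤ 2 / Real.sqrt π * (Real.sqrt 2 * Real.exp (-(u ^ 2 / 2)) / 2) := hfin
    _ = Real.sqrt (2 / π) * Real.exp (-(u ^ 2) / 2) := by
        rw [h2π, hE]; field_simp

lemma hasDerivAt_erfc (x : ℝ) :
    HasDerivAt erfc (-(2 / Real.sqrt π * Real.exp (-x ^ 2))) x :=
  (hasDerivAt_erf x).const_sub 1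

lemma hasDerivAt_fbar (m s : ℝ) (hs : 0 < s) :
    HasDerivAt (fun s => fbar m s)
      (Real.sqrt (2 / π) * (m - 1) * Real.exp (-((m - 1) ^ 2 * s) / 2) / Real.sqrt s
        - (m - 1) ^ 2 * erfc ((m - 1) * Real.sqrt s / Real.sqrt 2)) s := by
  have hrs : Real.sqrt s ≠ 0 := by positivity
  have h2 : Real.sqrt 2 ≠ 0 := by positivity
  have hπ : Real.sqrt π ≠ 0 := by positivity
  have hr : HasDerivAt Real.sqrt (1 / (2 * Real.sqrt s)) s := Real.hasDerivAt_sqrt hs.ne'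
  have hφ : HasDerivAt (fun s => (m - 1) * Real.sqrt s / Real.sqrt 2)
      ((m - 1) * (1 / (2 * Real.sqrt s)) / Real.sqrt 2) s := (hr.const_mul _).div_const _
  have hA := (hasDerivAt_erf ((m - 1) * Real.sqrt s / Real.sqrt 2)).comp s hφ
  have hlin : HasDerivAt (fun s : ℝ => -((m - 1) ^ 2 * s) / 2) (-((m - 1) ^ 2 * 1) / 2) s :=
    (((hasDerivAt_id s).const_mul ((m - 1) ^ 2)).neg).div_const 2
  have hexp := hlin.exp
  have hB := (hr.const_mul (Real.sqrt (2 / π) * (m - 1))).mul hexp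
  have hC := ((hasDerivAt_id s).const_mul ((m - 1) ^ 2)).mul
    ((hasDerivAt_erfc ((m - 1) * Real.sqrt s / Real.sqrt 2)).comp s hφ)
  have hall : HasDerivAt (fun s => fbar m s)
      (2 / Real.sqrt π * Real.exp (-((m - 1) * Real.sqrt s / Real.sqrt 2) ^ 2)
          * ((m - 1) * (1 / (2 * Real.sqrt s)) / Real.sqrt 2)
        + (Real.sqrt (2 / π) * (m - 1) * (1 / (2 * Real.sqrt s))
              * Real.exp (-((m - 1) ^ 2 * s) / 2)
            + Real.sqrt (2 / π) * (m - 1) * Real.sqrt s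
              * (Real.exp (-((m - 1) ^ 2 * s) / 2) * (-((m - 1) ^ 2 * 1) / 2)))
        - ((m - 1) ^ 2 * 1 * erfc ((m - 1) * Real.sqrt s / Real.sqrt 2)
            + (m - 1) ^ 2 * s
              * (-(2 / Real.sqrt π * Real.exp (-((m - 1) * Real.sqrt s / Real.sqrt 2) ^ 2))
                  * ((m - 1) * (1 / (2 * Real.sqrt s)) / Real.sqrt 2)))) s :=
    (hA.add hB).sub hC
  have hφ2 : Real.exp (-((m - 1) * Real.sqrt s / Real.sqrt 2) ^ 2)
      = Real.exp (-((m - 1) ^ 2 * s) / 2) := by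
    congr 1
    rw [div_pow, mul_pow, Real.sq_sqrt hs.le, Real.sq_sqrt (by norm_num : (0:ℝ) ≤ 2), neg_div]
  have h2π : Real.sqrt (2 / π) = Real.sqrt 2 / Real.sqrt π :=
    Real.sqrt_div (by norm_num) π
  have hss : Real.sqrt s * Real.sqrt s = s := Real.mul_self_sqrt hs.le
  have h22 : Real.sqrt 2 * Real.sqrt 2 = 2 := Real.mul_self_sqrt (by norm_num)
  convert hall using 1
  rw [hφ2, h2π]
  set E := Real.exp (-((m - 1) ^ 2 * s) / 2) with hE
  set C := erfc ((m - 1) * Real.sqrt s / Real.sqrt 2) with hC'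
  obtain ⟨R, hR⟩ : ∃ R, Real.sqrt s = R := ⟨_, rfl⟩
  obtain ⟨T, hT⟩ : ∃ T, Real.sqrt 2 = T := ⟨_, rfl⟩
  obtain ⟨P, hP⟩ : ∃ P, Real.sqrt π = P := ⟨_, rfl⟩
  have hRR : R * R = s := by rw [← hR]; exact hss
  have hTT : T * T = 2 := by rw [← hT]; exact h22
  rw [hR, hT, hP]
  rw [← hRR]
  have hR0 : R ≠ 0 := by rw [← hR]; exact (by positivity : Real.sqrt s ≠ 0)
  have hT0 : T ≠ 0 := by rw [← hT]; positivity
  have hP0 : P ≠ 0 := by rw [← hP]; positivity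
  field_simp
  ring_nf
  have e2 : T ^ 2 = 2 := by rw [sq, hTT]
  have e3 : T ^ 3 = 2 * T := by rw [pow_succ, e2]
  rw [e2]
  ring

lemma continuous_erf : Continuous erf := by
  rw [continuous_iff_continuousAt]
  exact fun x => (hasDerivAt_erf x).continuousAt


/-- for `m ≥ 1`, `s ↦ f̄(m, s)` is monotone nondecreasing on `[0, ∞)`. -/
theorem fbar_monotoneOn (m : ℝ) (hm : 1 ≤ m) :
    MonotoneOn (fun s => fbar m s) (Set.Ici (0 : ℝ)) := by
  rcases eq_or_lt_of_le hm with heq | hm'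
  · have : (fun s => fbar m s) = fun _ => (0:ℝ) := by
      funext s
      simp [fbar, ← heq, erfc, erf]
    rw [this]
    exact monotoneOn_const
  · have ha : 0 < m - 1 := sub_pos.mpr hm'
    apply monotoneOn_of_deriv_nonneg (convex_Ici 0)
    · -- continuity
      have c1 : Continuous fun s : ℝ => (m - 1) * Real.sqrt s / Real.sqrt 2 := by continuity
      have c2 : Continuous fun s : ℝ => Real.exp (-((m - 1) ^ 2 * s) / 2) := by continuity
      have c3 : Continuous fun s : ℝ => (m - 1) ^ 2 * s := by continuity
      exact (((continuous_erf.comp c1).add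
        (((continuous_const.mul Real.continuous_sqrt)).mul c2)).sub
        (c3.mul ((continuous_const.sub continuous_erf).comp c1))).continuousOn
    · intro x hx
      rw [interior_Ici] at hx
      exact (hasDerivAt_fbar m x hx).differentiableAt.differentiableWithinAt
    · intro x hx
      rw [interior_Ici] at hx
      rw [(hasDerivAt_fbar m x hx).deriv]
      have hrx : 0 < Real.sqrt x := Real.sqrt_pos.mpr hx
      have hkey := key_bound ((m - 1) * Real.sqrt x) (by positivity)
      rw [show ((m - 1) * Real.sqrt x) ^ 2 = (m - 1) ^ 2 * x by
        rw [mul_pow, Real.sq_sqrt hx.le]] at hkey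
      have hc : (0:ℝ) ≤ (m - 1) / Real.sqrt x := by positivity
      have hmul := mul_le_mul_of_nonneg_left hkey hc
      have e1 : (m - 1) / Real.sqrt x * ((m - 1) * Real.sqrt x
          * erfc ((m - 1) * Real.sqrt x / Real.sqrt 2))
          = (m - 1) ^ 2 * erfc ((m - 1) * Real.sqrt x / Real.sqrt 2) := by
        field_simp
      have e2 : (m - 1) / Real.sqrt x
          * (Real.sqrt (2 / π) * Real.exp (-((m - 1) ^ 2 * x) / 2))
          = Real.sqrt (2 / π) * (m - 1) * Real.exp (-((m - 1) ^ 2 * x) / 2) / Real.sqrt x := by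
        field_simp
      rw [e1, e2] at hmul
      linarith
end

section
/- For every real M ≥ 2, every ρ > 0, every h ≥ 0, and every j > 0, f̄(M, 2h²/(ρ·j²)) · log₂(M − 1) ≤ √32 · (h/j) · (M/√ρ) · log₂(M). -/
open Real

lemma erf_le_one {x : ℝ} (hx : 0 ≤ x) : erf x ≤ 1 := by
  have hint : ∫ t in (0:ℝ)..x, Real.exp (-t ^ 2) ≤ Real.sqrt π / 2 := by
    have h1 : ∫ t in (0:ℝ)..x, Real.exp (-t ^ 2)
        = ∫ t in Set.Ioc (0:ℝ) x, Real.exp (-t ^ 2) := by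
      rw [intervalIntegral.integral_of_le hx]
    rw [h1]
    have h2 : ∫ t in Set.Ioc (0:ℝ) x, Real.exp (-t ^ 2)
        ≤ ∫ t in Set.Ioi (0:ℝ), Real.exp (-t ^ 2) := by
      apply MeasureTheory.setIntegral_mono_set
      · have := (integrable_exp_neg_mul_sq (by norm_num : (0:ℝ) < 1)).integrableOn
          (s := Set.Ioi (0:ℝ))
        simpa using this
      · filter_upwards with t using (Real.exp_pos _).le
      · exact HasSubset.Subset.eventuallyLE Set.Ioc_subset_Ioi_self
    have h3 : ∫ t in Set.Ioi (0:ℝ), Real.exp (-t ^ 2) = Real.sqrt π / 2 := by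
      have := integral_gaussian_Ioi (1:ℝ)
      simpa using this
    linarith
  have hπ : 0 < Real.sqrt π := Real.sqrt_pos.mpr Real.pi_pos
  have : erf x ≤ (2 / Real.sqrt π) * (Real.sqrt π / 2) := by
    unfold erf
    apply mul_le_mul_of_nonneg_left hint (by positivity)
  calc erf x ≤ (2 / Real.sqrt π) * (Real.sqrt π / 2) := this
    _ = 1 := by field_simp

lemma erf_le_linear {x : ℝ} (hx : 0 ≤ x) : erf x ≤ 2 / Real.sqrt π * x := by
  have hint : ∫ t in (0:ℝ)..x, Real.exp (-t ^ 2) ≤ x := by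
    have h := intervalIntegral.integral_mono_on (μ := MeasureTheory.volume) hx
      ((Real.continuous_exp.comp (by continuity)).intervalIntegrable 0 x)
      (intervalIntegrable_const (c := (1:ℝ)))
      (fun t _ => Real.exp_le_one_iff.mpr (neg_nonpos.mpr (sq_nonneg t)))
    rw [intervalIntegral.integral_const] at h
    simpa using h
  unfold erf
  have hπ : 0 < Real.sqrt π := Real.sqrt_pos.mpr Real.pi_pos
  exact mul_le_mul_of_nonneg_left hint (by positivity)

lemma fbar_le {M s : ℝ} (hM : 1 ≤ M) (hs : 0 ≤ s) :
    fbar M s ≤ 2 * Real.sqrt (2 / π) * (M - 1) * Real.sqrt s := by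
  have hπ : 0 < Real.sqrt π := Real.sqrt_pos.mpr Real.pi_pos
  have hM1 : 0 ≤ M - 1 := by linarith
  have hss : 0 ≤ Real.sqrt s := Real.sqrt_nonneg s
  have hx : 0 ≤ (M - 1) * Real.sqrt s / Real.sqrt 2 := by positivity
  have h2π : Real.sqrt (2 / π) = Real.sqrt 2 / Real.sqrt π := Real.sqrt_div' 2 Real.pi_pos.le
  -- first term
  have h1 : erf ((M - 1) * Real.sqrt s / Real.sqrt 2)
      ≤ Real.sqrt (2 / π) * (M - 1) * Real.sqrt s := by
    have := erf_le_linear hx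
    have h2 : (2:ℝ) / Real.sqrt π * ((M - 1) * Real.sqrt s / Real.sqrt 2)
        = Real.sqrt (2 / π) * (M - 1) * Real.sqrt s := by
      rw [h2π]
      have hs2 : Real.sqrt 2 * Real.sqrt 2 = 2 := Real.mul_self_sqrt (by norm_num)
      have hs2p : (0:ℝ) < Real.sqrt 2 := Real.sqrt_pos.mpr (by norm_num)
      field_simp
      linear_combination (-((M - 1) * Real.sqrt s)) * hs2
    linarith [this, h2.le, h2.ge]
  -- second term
  have h2 : Real.sqrt (2 / π) * (M - 1) * Real.sqrt s * Real.exp (-(((M - 1)) ^ 2 * s) / 2)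
      ≤ Real.sqrt (2 / π) * (M - 1) * Real.sqrt s := by
    have he : Real.exp (-((M - 1) ^ 2 * s) / 2) ≤ 1 := by
      apply Real.exp_le_one_iff.mpr
      have : 0 ≤ (M - 1) ^ 2 * s := by positivity
      linarith
    have hnn : 0 ≤ Real.sqrt (2 / π) * (M - 1) * Real.sqrt s := by positivity
    nlinarith
  -- third term
  have h3 : 0 ≤ (M - 1) ^ 2 * s * erfc ((M - 1) * Real.sqrt s / Real.sqrt 2) := by
    have : erf ((M - 1) * Real.sqrt s / Real.sqrt 2) ≤ 1 := erf_le_one hx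
    have : 0 ≤ erfc ((M - 1) * Real.sqrt s / Real.sqrt 2) := by unfold erfc; linarith
    positivity
  unfold fbar
  linarith

/-- inequality (51) in the proof of Proposition 2 of the paper. -/
theorem fbar_mul_logb_le (M ρ h j : ℝ) (hM : 2 ≤ M) (hρ : 0 < ρ) (hh : 0 ≤ h) (hj : 0 < j) :
    fbar M (2 * h ^ 2 / (ρ * j ^ 2)) * Real.logb 2 (M - 1)
      ≤ Real.sqrt 32 * (h / j) * (M / Real.sqrt ρ) * Real.logb 2 M := by
  set s : ℝ := 2 * h ^ 2 / (ρ * j ^ 2) with hs_def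
  have hs : 0 ≤ s := by positivity
  have hL1 : 0 ≤ Real.logb 2 (M - 1) := Real.logb_nonneg one_lt_two (by linarith)
  have hL2 : Real.logb 2 (M - 1) ≤ Real.logb 2 M :=
    Real.logb_le_logb_of_le (by norm_num) (by linarith) (by linarith)
  have hLM : 0 ≤ Real.logb 2 M := le_trans hL1 hL2
  -- √s = √2 * h / (√ρ * j)
  have hsqrt_s : Real.sqrt s = Real.sqrt 2 * h / (Real.sqrt ρ * j) := by
    rw [hs_def, Real.sqrt_div (by positivity), Real.sqrt_mul (by norm_num),
      Real.sqrt_mul hρ.le, Real.sqrt_sq hh, Real.sqrt_sq hj.le]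
  have h32 : Real.sqrt 32 = 4 * Real.sqrt 2 := by
    rw [show (32:ℝ) = 4 ^ 2 * 2 by norm_num, Real.sqrt_mul (by positivity),
      Real.sqrt_sq (by norm_num)]
  -- key chain
  have hfb : fbar M s ≤ 2 * Real.sqrt (2 / π) * (M - 1) * Real.sqrt s :=
    fbar_le (by linarith) hs
  have hB : 2 * Real.sqrt (2 / π) * (M - 1) * Real.sqrt s ≤ 4 * M * Real.sqrt s := by
    have h1 : Real.sqrt (2 / π) ≤ 1 := by
      calc Real.sqrt (2 / π) ≤ Real.sqrt 1 := by
            apply Real.sqrt_le_sqrt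
            rw [div_le_one Real.pi_pos]
            linarith [Real.pi_gt_three]
        _ = 1 := Real.sqrt_one
    have hss : 0 ≤ Real.sqrt s := Real.sqrt_nonneg s
    have h0 : 0 ≤ Real.sqrt (2 / π) := Real.sqrt_nonneg _
    have hA : 0 ≤ (M - 1) * Real.sqrt s := mul_nonneg (by linarith) hss
    have hstep : 2 * Real.sqrt (2 / π) * (M - 1) * Real.sqrt s
        ≤ 2 * ((M - 1) * Real.sqrt s) := by nlinarith
    nlinarith
  have hBnn : 0 ≤ 4 * M * Real.sqrt s := by positivity
  calc fbar M s * Real.logb 2 (M - 1)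
      ≤ (4 * M * Real.sqrt s) * Real.logb 2 (M - 1) :=
        mul_le_mul_of_nonneg_right (le_trans hfb hB) hL1
    _ ≤ (4 * M * Real.sqrt s) * Real.logb 2 M :=
        mul_le_mul_of_nonneg_left hL2 hBnn
    _ = Real.sqrt 32 * (h / j) * (M / Real.sqrt ρ) * Real.logb 2 M := by
        rw [hsqrt_s, h32]
        have hρ' : 0 < Real.sqrt ρ := Real.sqrt_pos.mpr hρ
        field_simp
end
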